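/- Let u, v be hermitian functionals not in Δ with Carathéodory series F, G, and let L, M be Laurent polynomials satisfying the symmetry (z^p L_*, z^p M_*) = (L, M) for some p ∈ ℤ. Then u·L = v·M holds if and only if there exists a Laurent polynomial C with F·L = G·M + C and z^p·C_* = −C. -/

import Mathlib

open LaurentPolynomial Complex Polynomial

noncomputable section

abbrev LP := LaurentPolynomial ℂ
abbrev Func := LP →ₗ[ℂ] ℂ

/-- The coefficients of a Laurent polynomial, as a finitely supported function on `ℤ`. -/
def coeF (L : LP) : ℤ →₀ ℂ := L.coeff

/-- The modified functional `u·L`, defined by `(u·L)[f] = u[L·f]`. -/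
def smulF (u : Func) (L : LP) : Func := u ∘ₗ LinearMap.mulLeft ℂ L

/-- The moments `μ_n = u[zⁿ]`. -/
def moment (u : Func) (n : ℤ) : ℂ := u (T n)

/-- A functional is hermitian if `μ_{-n} = conj μ_n`. -/
def IsHermitian (u : Func) : Prop := ∀ n : ℤ, moment u (-n) = (starRingEnd ℂ) (moment u n)

/-- The Carathéodory formal series `F(z) = μ₀ + 2 Σ_{n≥1} μ_{-n} zⁿ`, as coefficients. -/
def CS (u : Func) : ℤ → ℂ := fun n => if n = 0 then moment u 0 else if 0 < n then 2 * moment u (-n) else 0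

/-- The Laurent formal series `L[u](z) = Σ_{n∈ℤ} μ_{-n} zⁿ`, as coefficients. -/
def LS (u : Func) : ℤ → ℂ := fun n => moment u (-n)

/-- `H_*(z) = conj (H (1/conj z))`, coefficient-wise. -/
def starS (H : ℤ → ℂ) : ℤ → ℂ := fun n => (starRingEnd ℂ) (H (-n))

/-- Product of a formal doubly-infinite series with a Laurent polynomial. -/
def mulS (H : ℤ → ℂ) (L : LP) : ℤ → ℂ := fun n => (coeF L).sum fun k c => c * H (n - k)

/-- The `*` operation on Laurent polynomials: `L_*(z) = conj (L (1/conj z))`. -/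
def starLP (L : LP) : LP :=
  AddMonoidAlgebra.ofCoeff (Finsupp.equivMapDomain (Equiv.neg ℤ)
    (Finsupp.mapRange (starRingEnd ℂ) (map_zero _) (coeF L)) : ℤ →₀ ℂ)

/-- A Laurent polynomial as a formal series. -/
def polyS (N : LP) : ℤ → ℂ := fun n => coeF N n

/-- The Lebesgue functional `leb[zⁿ] = δ_{n,0}`. -/
def lebF : Func := (Finsupp.lapply (0 : ℤ) : (ℤ →₀ ℂ) →ₗ[ℂ] ℂ) ∘ₗ
  (AddMonoidAlgebra.coeffLinearEquiv ℂ : LP ≃ₗ[ℂ] ℤ →₀ ℂ).toLinearMap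

/-- The Dirac delta at `z = 1`: evaluation at `1`. -/
def delta1 : Func := (Finsupp.lsum ℂ (fun _ : ℤ => (LinearMap.id : ℂ →ₗ[ℂ] ℂ)) : (ℤ →₀ ℂ) →ₗ[ℂ] ℂ) ∘ₗ
  (AddMonoidAlgebra.coeffLinearEquiv ℂ : LP ≃ₗ[ℂ] ℤ →₀ ℂ).toLinearMap

/-- `P* (z) = z^q conj(P(1/conj z))` with `q` given: conjugate coefficients and reflect at `q`. -/
def starDeg (q : ℕ) (P : Polynomial ℂ) : Polynomial ℂ := Polynomial.reflect q (P.map (starRingEnd ℂ))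

/-- The class `Δ` of hermitian functionals annihilated by a nonzero Laurent polynomial. -/
def InDelta (u : Func) : Prop := IsHermitian u ∧ ∃ N : LP, N ≠ 0 ∧ smulF u N = 0

/-!
By hermitian symmetry the Carathéodory series satisfies `F + F_* = 2 L[u]` coefficientwise, so for
`L` with `z^p L_* = L` the coefficients of `F·L` obey
`conj (F·L)_{p-n} + (F·L)_n = 2 u[L z^{-n}]`.
Hence `u·L = v·M`, i.e. `u[L zᵐ] = v[M zᵐ]` for all `m`, says exactly that `C := F·L - G·M`
satisfies `z^p C_* = -C`. Moreover `C` is a Laurent polynomial: `(F·L)_n` vanishes below the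
support of `L` and equals `2 u[L z^{-n}]` above it, so `C_n = 0` outside a bounded interval.
-/

namespace CaratheodorySeries

lemma coeF_T_mul (Q : LP) (p n : ℤ) : coeF (T p * Q) n = coeF Q (n - p) := by
  have h := AddMonoidAlgebra.coeff_single_mul_apply Q (1 : ℂ) p n
  rwa [one_mul, neg_add_eq_sub] at h

lemma coeF_neg (Q : LP) (n : ℤ) : coeF (-Q) n = -coeF Q n := rfl

lemma coeF_starLP (Q : LP) (n : ℤ) : coeF (starLP Q) n = starRingEnd ℂ (coeF Q (-n)) := by
  simp [starLP, coeF, Finsupp.equivMapDomain_apply]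

lemma T_mul_starLP_eq_iff {Q R : LP} {p : ℤ} :
    T p * starLP Q = R ↔ ∀ n, starRingEnd ℂ (coeF Q (p - n)) = coeF R n := by
  have hcoeF : ∀ n, coeF (T p * starLP Q) n = starRingEnd ℂ (coeF Q (p - n)) := fun n => by
    rw [coeF_T_mul, coeF_starLP, neg_sub]
  refine ⟨fun h n => by rw [← hcoeF, h], fun h => AddMonoidAlgebra.coeff_injective ?_⟩
  exact Finsupp.ext fun n => (hcoeF n).trans (h n)

lemma exists_coeF_eq_of_finite_support {D : ℤ → ℂ} (hD : (Function.support D).Finite) :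
    ∃ C : LP, ∀ n, coeF C n = D n :=
  ⟨AddMonoidAlgebra.ofCoeff (Finsupp.ofSupportFinite D hD), fun _ => rfl⟩

lemma apply_single (u : Func) (k : ℤ) (c : ℂ) :
    u (AddMonoidAlgebra.single k c : LP) = c * moment u k := by
  rw [← mul_one c, ← AddMonoidAlgebra.smul_single', map_smul, smul_eq_mul, mul_one, moment, T]

lemma apply_mul_T (u : Func) (L : LP) (m : ℤ) :
    u (L * T m) = (coeF L).sum fun k c => c * moment u (k + m) := by
  conv_lhs => rw [← AddMonoidAlgebra.sum_coeff_single L]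
  simp only [Finsupp.sum, Finset.sum_mul, map_sum, T, AddMonoidAlgebra.single_mul_single,
    mul_one, apply_single, coeF]

lemma smulF_eq_smulF_iff {u v : Func} {L M : LP} :
    smulF u L = smulF v M ↔ ∀ m, u (L * T m) = v (M * T m) := by
  refine ⟨fun h m => LinearMap.congr_fun h (T m), fun h => ?_⟩
  refine AddMonoidAlgebra.lhom_ext' fun k => LinearMap.ext fun c => ?_
  have hsingle : (AddMonoidAlgebra.single k c : LP) = c • T k := by
    rw [T, AddMonoidAlgebra.smul_single, smul_eq_mul, mul_one]
  change smulF u L (AddMonoidAlgebra.single k c) = smulF v M (AddMonoidAlgebra.single k c)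
  rw [hsingle, map_smul, map_smul]
  exact congrArg (c • ·) (h k)

variable {u v : Func} {L M : LP} {p : ℤ}

lemma conj_CS_add_CS_neg (hu : IsHermitian u) (m : ℤ) :
    starRingEnd ℂ (CS u m) + CS u (-m) = 2 * moment u m := by
  rcases lt_trichotomy m 0 with hm | rfl | hm
  · simp [CS, hm.ne, hm, not_lt.2 hm.le]
  · simp only [CS, neg_zero, if_true, ← hu 0]
    ring
  · simp [CS, hm.ne', hm, not_lt.2 hm.le, hu m, map_ofNat]

lemma conj_mulS_add_mulS (hu : IsHermitian u) (hL : T p * starLP L = L) (n : ℤ) :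
    starRingEnd ℂ (mulS (CS u) L (p - n)) + mulS (CS u) L n = 2 * u (L * T (-n)) := by
  have hsym : ∀ j, starRingEnd ℂ (coeF L (p - j)) = coeF L j := T_mul_starLP_eq_iff.1 hL
  have hsupp : ∀ k ∈ (coeF L).support, p - k ∈ (coeF L).support := fun k hk =>
    Finsupp.mem_support_iff.2 fun h0 =>
      Finsupp.mem_support_iff.1 hk (by rw [← hsym k, h0, map_zero])
  have hconj : starRingEnd ℂ (mulS (CS u) L (p - n))
      = ∑ k ∈ (coeF L).support, coeF L k * starRingEnd ℂ (CS u (k - n)) := by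
    rw [mulS, Finsupp.sum, map_sum]
    refine Finset.sum_nbij' (fun k => p - k) (fun k => p - k) hsupp hsupp
      (fun _ _ => sub_sub_cancel _ _) (fun _ _ => sub_sub_cancel _ _) fun k _ => ?_
    rw [map_mul, ← hsym (p - k), sub_sub_cancel, sub_right_comm]
  rw [hconj, apply_mul_T, mulS, Finsupp.sum, Finsupp.sum, ← Finset.sum_add_distrib,
    Finset.mul_sum]
  refine Finset.sum_congr rfl fun k _ => ?_
  rw [← mul_add, ← neg_sub k n, conj_CS_add_CS_neg hu, ← sub_eq_add_neg]
  ring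

lemma mulS_CS_eq_zero_of_lt (N : LP) {n : ℤ} (h : ∀ k ∈ (coeF N).support, n < k) :
    mulS (CS u) N n = 0 := by
  refine Finset.sum_eq_zero fun k hk => ?_
  have hlt := h k hk
  dsimp only
  rw [CS, if_neg (by omega), if_neg (by omega), mul_zero]

lemma mulS_CS_eq_of_gt (N : LP) {n : ℤ} (h : ∀ k ∈ (coeF N).support, k < n) :
    mulS (CS u) N n = 2 * u (N * T (-n)) := by
  rw [apply_mul_T, mulS, Finsupp.sum, Finsupp.sum, Finset.mul_sum]
  refine Finset.sum_congr rfl fun k hk => ?_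
  have hlt := h k hk
  rw [CS, if_neg (by omega), if_pos (by omega), neg_sub, sub_eq_add_neg]
  ring

lemma finite_support_mulS_CS_sub (h : ∀ m, u (L * T m) = v (M * T m)) :
    (Function.support fun n => mulS (CS u) L n - mulS (CS v) M n).Finite := by
  obtain ⟨a, ha⟩ := ((coeF L).support ∪ (coeF M).support).bddBelow
  obtain ⟨b, hb⟩ := ((coeF L).support ∪ (coeF M).support).bddAbove
  refine (Set.finite_Icc a b).subset fun n hn => ?_
  by_contra hab
  simp only [Set.mem_Icc, not_and_or, not_le] at hab
  rcases hab with hn' | hn' <;> apply hn <;> dsimp only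
  · rw [mulS_CS_eq_zero_of_lt L fun k hk => hn'.trans_le (ha (by simp [hk])),
      mulS_CS_eq_zero_of_lt M fun k hk => hn'.trans_le (ha (by simp [hk])), sub_zero]
  · rw [mulS_CS_eq_of_gt L fun k hk => (hb (by simp [hk])).trans_lt hn',
      mulS_CS_eq_of_gt M fun k hk => (hb (by simp [hk])).trans_lt hn', h, sub_self]

lemma T_mul_starLP_eq_neg_iff_apply_mul_T_eq (hu : IsHermitian u) (hv : IsHermitian v)
    (hL : T p * starLP L = L) (hM : T p * starLP M = M) {C : LP}
    (hC : ∀ n, coeF C n = mulS (CS u) L n - mulS (CS v) M n) :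
    T p * starLP C = -C ↔ ∀ m, u (L * T m) = v (M * T m) := by
  have hcoeff_iff : ∀ n, starRingEnd ℂ (coeF C (p - n)) = coeF (-C) n ↔
      u (L * T (-n)) = v (M * T (-n)) := fun n => by
    have hsum : starRingEnd ℂ (coeF C (p - n)) - coeF (-C) n
        = 2 * (u (L * T (-n)) - v (M * T (-n))) := by
      rw [coeF_neg, hC, hC, map_sub]
      linear_combination conj_mulS_add_mulS hu hL n - conj_mulS_add_mulS hv hM n
    rw [← sub_eq_zero, hsum, mul_eq_zero, sub_eq_zero, or_iff_right two_ne_zero]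
  rw [T_mul_starLP_eq_iff]
  exact (forall_congr' hcoeff_iff).trans ⟨fun h m => by simpa using h (-m), fun h n => h (-n)⟩

end CaratheodorySeries

open CaratheodorySeries

theorem stmt10_general (u v : Func) (hu : IsHermitian u) (hv : IsHermitian v)
    (L M : LP) (p : ℤ)
    (hLs : T p * starLP L = L) (hMs : T p * starLP M = M) :
    smulF u L = smulF v M ↔
      ∃ C : LP, mulS (CS u) L = (fun n => mulS (CS v) M n + coeF C n) ∧
        T p * starLP C = -C := by
  rw [smulF_eq_smulF_iff]
  constructor
  · intro h
    obtain ⟨C, hC⟩ := exists_coeF_eq_of_finite_support (finite_support_mulS_CS_sub h)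
    exact ⟨C, funext fun n => by rw [hC]; ring,
      (T_mul_starLP_eq_neg_iff_apply_mul_T_eq hu hv hLs hMs hC).2 h⟩
  · rintro ⟨C, hFG, hC⟩
    exact (T_mul_starLP_eq_neg_iff_apply_mul_T_eq hu hv hLs hMs
      fun n => by rw [hFG]; ring).1 hC

/-- for hermitian `u, v ∉ Δ` and a symmetric pair
`(z^p L_*, z^p M_*) = (L, M)`, one has `u·L = v·M` iff `F·L = G·M + C` for some Laurent
polynomial `C` with `z^p C_* = -C`. -/
theorem stmt10 (u v : Func) (hu : IsHermitian u) (hv : IsHermitian v)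
    (hud : ¬ InDelta u) (hvd : ¬ InDelta v)
    (L M : LP) (p : ℤ)
    (hLs : T p * starLP L = L) (hMs : T p * starLP M = M) :
    smulF u L = smulF v M ↔
      ∃ C : LP, mulS (CS u) L = (fun n => mulS (CS v) M n + coeF C n) ∧
        T p * starLP C = -C :=
  stmt10_general u v hu hv L M p hLs hMs
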